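/- For probability measures μ, ν on ℝ with finite second moments, W₂²(μ,ν) = ∫₀¹ |F⁻¹(p) − G⁻¹(p)|² dp, where F⁻¹ and G⁻¹ are the quantile functions of μ and ν respectively. -/

import Mathlib

/-!
The quantile function of a probability measure on `ℝ` pushes Lebesgue measure on `(0, 1)`
forward to that measure, so `p ↦ (F⁻¹ p, G⁻¹ p)` carries Lebesgue measure to a coupling of `μ`
and `ν`, the comonotone coupling, whose cost is the right-hand side. It is optimal: the cost of a
coupling `π` is `∫ x² dμ + ∫ y² dν - 2 ∫ x y dπ`, and writing `x = ∫ (𝟙[0 ≤ s] - 𝟙[x ≤ s]) ds`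
(Hoeffding) shows that `∫ x y dπ` depends on `π` only through its marginals and is monotone in
the values `π ((-∞, s] × (-∞, t])`. These are at most `min (F s) (G t)`, which is exactly what
the comonotone coupling attains.
-/

open MeasureTheory

/-- Kantorovich formulation of squared `W₂` on `ℝ`. -/
noncomputable def W2sq (μ ν : Measure ℝ) : ℝ :=
  sInf {C : ℝ | ∃ π : Measure (ℝ × ℝ),
    IsProbabilityMeasure π ∧ π.fst = μ ∧ π.snd = ν ∧
    C = ∫ p, |p.1 - p.2| ^ 2 ∂π}

open Set ProbabilityTheory

noncomputable def layer (x s : ℝ) : ℝ := (if 0 ≤ s then 1 else 0) - (if x ≤ s then 1 else 0)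

lemma layer_eq_indicator_sub_indicator (x : ℝ) :
    layer x = (Ico 0 x).indicator 1 - (Ico x 0).indicator 1 := by
  ext s
  simp only [layer, Pi.sub_apply, indicator_apply, mem_Ico, Pi.one_apply]
  split_ifs <;> grind

lemma abs_layer_eq_indicator_add_indicator (x : ℝ) :
    (fun s => |layer x s|) = (Ico 0 x).indicator 1 + (Ico x 0).indicator 1 := by
  ext s
  simp only [layer, Pi.add_apply, indicator_apply, mem_Ico, Pi.one_apply]
  split_ifs <;> grind

lemma integrable_indicator_Ico_one (a b : ℝ) : Integrable ((Ico a b).indicator (1 : ℝ → ℝ)) :=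
  (integrable_indicator_iff measurableSet_Ico).mpr
    (integrableOn_const (by simp [Real.volume_Ico]))

lemma integrable_layer (x : ℝ) : Integrable (layer x) := by
  rw [layer_eq_indicator_sub_indicator]
  exact (integrable_indicator_Ico_one 0 x).sub (integrable_indicator_Ico_one x 0)

lemma integral_layer (x : ℝ) : ∫ s, layer x s = x := by
  rw [layer_eq_indicator_sub_indicator, integral_sub' (integrable_indicator_Ico_one 0 x)
    (integrable_indicator_Ico_one x 0), integral_indicator_one measurableSet_Ico,
    integral_indicator_one measurableSet_Ico, Real.volume_real_Ico, Real.volume_real_Ico,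
    sub_zero, zero_sub, max_zero_sub_max_neg_zero_eq_self]

lemma integral_abs_layer (x : ℝ) : ∫ s, |layer x s| = |x| := by
  rw [abs_layer_eq_indicator_add_indicator, integral_add' (integrable_indicator_Ico_one 0 x)
    (integrable_indicator_Ico_one x 0), integral_indicator_one measurableSet_Ico,
    integral_indicator_one measurableSet_Ico, Real.volume_real_Ico, Real.volume_real_Ico,
    sub_zero, zero_sub, max_zero_add_max_neg_zero_eq_abs_self]

lemma measurable_layer : Measurable (Function.uncurry layer) := by
  unfold layer
  refine Measurable.sub ?_ ?_ <;> refine Measurable.ite ?_ measurable_const measurable_const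
  · exact measurableSet_le measurable_const measurable_snd
  · exact measurableSet_le measurable_fst measurable_snd

lemma integrable_layer_mul_layer {π : Measure (ℝ × ℝ)} [SFinite π]
    (h : Integrable (fun p : ℝ × ℝ => p.1 * p.2) π) :
    Integrable (fun q : (ℝ × ℝ) × (ℝ × ℝ) => layer q.1.1 q.2.1 * layer q.1.2 q.2.2)
      (π.prod volume) := by
  have hmeas : Measurable fun q : (ℝ × ℝ) × (ℝ × ℝ) => layer q.1.1 q.2.1 * layer q.1.2 q.2.2 :=
    (measurable_layer.comp (measurable_fst.fst.prodMk measurable_snd.fst)).mul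
      (measurable_layer.comp (measurable_fst.snd.prodMk measurable_snd.snd))
  refine (integrable_prod_iff hmeas.aestronglyMeasurable).mpr
    ⟨.of_forall fun (p : ℝ × ℝ) => ?_, ?_⟩
  · rw [Measure.volume_eq_prod]
    exact (integrable_layer p.1).mul_prod (integrable_layer p.2)
  · refine h.norm.congr (.of_forall fun p => ?_)
    simp only [norm_mul, Real.norm_eq_abs]
    rw [Measure.volume_eq_prod,
      integral_prod_mul (fun s => |layer p.1 s|) (fun t => |layer p.2 t|), integral_abs_layer,
      integral_abs_layer]

lemma integral_mul_eq_integral_integral_layer {π : Measure (ℝ × ℝ)} [SFinite π]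
    (h : Integrable (fun p : ℝ × ℝ => p.1 * p.2) π) :
    ∫ p, p.1 * p.2 ∂π = ∫ z : ℝ × ℝ, ∫ p, layer p.1 z.1 * layer p.2 z.2 ∂π := by
  have hxy (p : ℝ × ℝ) : ∫ z : ℝ × ℝ, layer p.1 z.1 * layer p.2 z.2 = p.1 * p.2 := by
    rw [Measure.volume_eq_prod, integral_prod_mul, integral_layer, integral_layer]
  calc ∫ p, p.1 * p.2 ∂π = ∫ p, (∫ z : ℝ × ℝ, layer p.1 z.1 * layer p.2 z.2) ∂π :=
        integral_congr_ae (.of_forall fun p => (hxy p).symm)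
    _ = _ := integral_integral_swap (integrable_layer_mul_layer h)

lemma integral_layer_mul_layer (π : Measure (ℝ × ℝ)) [IsProbabilityMeasure π] (s t : ℝ) :
    ∫ p, layer p.1 s * layer p.2 t ∂π =
      π.real (Iic s ×ˢ Iic t) - (if 0 ≤ t then 1 else 0) * π.fst.real (Iic s)
        - (if 0 ≤ s then 1 else 0) * π.snd.real (Iic t)
        + (if 0 ≤ s then 1 else 0) * (if 0 ≤ t then 1 else 0) := by
  set a : ℝ := if 0 ≤ s then 1 else 0
  set b : ℝ := if 0 ≤ t then 1 else 0
  set A : Set (ℝ × ℝ) := Prod.fst ⁻¹' Iic s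
  set B : Set (ℝ × ℝ) := Prod.snd ⁻¹' Iic t
  have hA : MeasurableSet A := measurable_fst measurableSet_Iic
  have hB : MeasurableSet B := measurable_snd measurableSet_Iic
  have hexpand (p : ℝ × ℝ) : layer p.1 s * layer p.2 t =
      (A ∩ B).indicator 1 p - b * A.indicator 1 p - a * B.indicator 1 p + a * b := by
    classical
    simp only [layer, A, B, a, b, indicator_apply, mem_inter_iff, mem_preimage, mem_Iic,
      Pi.one_apply]
    split_ifs <;> grind
  have hIA : Integrable (A.indicator (1 : ℝ × ℝ → ℝ)) π := (integrable_const 1).indicator hA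
  have hIB : Integrable (B.indicator (1 : ℝ × ℝ → ℝ)) π := (integrable_const 1).indicator hB
  have hIAB : Integrable ((A ∩ B).indicator (1 : ℝ × ℝ → ℝ)) π :=
    (integrable_const 1).indicator (hA.inter hB)
  have hI₁ : Integrable (fun p => (A ∩ B).indicator 1 p - b * A.indicator 1 p) π :=
    hIAB.sub (hIA.const_mul b)
  have hI₂ : Integrable
      (fun p => (A ∩ B).indicator 1 p - b * A.indicator 1 p - a * B.indicator 1 p) π :=
    hI₁.sub (hIB.const_mul a)
  rw [integral_congr_ae (.of_forall hexpand), integral_add hI₂ (integrable_const _),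
    integral_sub hI₁ (hIB.const_mul a), integral_sub hIAB (hIA.const_mul b), integral_const_mul,
    integral_const_mul, integral_indicator_one (hA.inter hB), integral_indicator_one hA,
    integral_indicator_one hB, integral_const, ← prod_eq]
  simp [measureReal_def, Measure.fst_apply measurableSet_Iic, Measure.snd_apply measurableSet_Iic,
    A, B]

lemma integral_mul_le_of_forall_measure_Iic_prod_le {π π' : Measure (ℝ × ℝ)}
    [IsProbabilityMeasure π] [IsProbabilityMeasure π']
    (hπ : Integrable (fun p : ℝ × ℝ => p.1 * p.2) π)
    (hπ' : Integrable (fun p : ℝ × ℝ => p.1 * p.2) π')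
    (hfst : π.fst = π'.fst) (hsnd : π.snd = π'.snd)
    (hle : ∀ s t, π (Iic s ×ˢ Iic t) ≤ π' (Iic s ×ˢ Iic t)) :
    ∫ p, p.1 * p.2 ∂π ≤ ∫ p, p.1 * p.2 ∂π' := by
  rw [integral_mul_eq_integral_integral_layer hπ, integral_mul_eq_integral_integral_layer hπ']
  refine integral_mono (integrable_layer_mul_layer hπ).integral_prod_right
    (integrable_layer_mul_layer hπ').integral_prod_right fun z => ?_
  have hle' : π.real (Iic z.1 ×ˢ Iic z.2) ≤ π'.real (Iic z.1 ×ˢ Iic z.2) :=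
    ENNReal.toReal_mono (measure_ne_top _ _) (hle z.1 z.2)
  simp only [integral_layer_mul_layer, hfst, hsnd]
  linarith

lemma StieltjesFunction.le_apply_csInf (f : StieltjesFunction ℝ) {p : ℝ}
    (hne : {x | p ≤ f x}.Nonempty) : p ≤ f (sInf {x | p ≤ f x}) := by
  refine ge_of_tendsto ((f.right_continuous _).mono Ioi_subset_Ici_self).tendsto
    (eventually_nhdsWithin_of_forall fun y hy => ?_)
  obtain ⟨z, hz, hzy⟩ := exists_lt_of_csInf_lt hne hy
  exact hz.trans (f.mono hzy.le)

noncomputable def quantile (μ : Measure ℝ) (p : ℝ) : ℝ := sInf {x | p ≤ cdf μ x}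

section Quantile

variable (μ : Measure ℝ) {p : ℝ}

lemma nonempty_setOf_le_cdf (hp : p < 1) : {x | p ≤ cdf μ x}.Nonempty :=
  (((tendsto_cdf_atTop μ).eventually (eventually_gt_nhds hp)).exists).imp fun _ => le_of_lt

lemma bddBelow_setOf_le_cdf (hp : 0 < p) : BddBelow {x | p ≤ cdf μ x} := by
  obtain ⟨x₀, hx₀⟩ :=
    Filter.eventually_atBot.mp ((tendsto_cdf_atBot μ).eventually (eventually_lt_nhds hp))
  exact ⟨x₀, fun x hx => le_of_not_ge fun hxx₀ => (hx.trans_lt (hx₀ x hxx₀)).false⟩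

lemma quantile_le_iff (hp : p ∈ Ioo 0 1) (x : ℝ) : quantile μ p ≤ x ↔ p ≤ cdf μ x :=
  ⟨fun h => ((cdf μ).le_apply_csInf (nonempty_setOf_le_cdf μ hp.2)).trans ((cdf μ).mono h),
    fun h => csInf_le (bddBelow_setOf_le_cdf μ hp.1) h⟩

lemma monotoneOn_quantile : MonotoneOn (quantile μ) (Ioo 0 1) := fun _ hp _ hq hpq =>
  (quantile_le_iff μ hp _).mpr (hpq.trans ((quantile_le_iff μ hq _).mp le_rfl))

lemma aemeasurable_quantile : AEMeasurable (quantile μ) (volume.restrict (Ioo 0 1)) :=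
  aemeasurable_restrict_of_monotoneOn measurableSet_Ioo (monotoneOn_quantile μ)

lemma preimage_quantile_Iic_inter_Ioo (x : ℝ) :
    quantile μ ⁻¹' Iic x ∩ Ioo 0 1 = Iic (cdf μ x) ∩ Ioo 0 1 := by
  ext p
  exact and_congr_left fun hp => quantile_le_iff μ hp x

end Quantile

lemma volume_Iic_inter_Ioo_zero_one {c : ℝ} (h₁ : c ≤ 1) :
    volume (Iic c ∩ Ioo 0 1) = ENNReal.ofReal c := by
  refine le_antisymm ?_ ?_
  · calc volume (Iic c ∩ Ioo 0 1) ≤ volume (Icc 0 c) :=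
          measure_mono fun p hp => ⟨hp.2.1.le, hp.1⟩
      _ = ENNReal.ofReal c := by rw [Real.volume_Icc, sub_zero]
  · calc ENNReal.ofReal c = volume (Ioo 0 c) := by rw [Real.volume_Ioo, sub_zero]
      _ ≤ volume (Iic c ∩ Ioo 0 1) :=
          measure_mono fun p hp => ⟨hp.2.le, hp.1, hp.2.trans_le h₁⟩

instance : IsProbabilityMeasure (volume.restrict (Ioo (0 : ℝ) 1)) :=
  ⟨by simp [Real.volume_Ioo]⟩

lemma map_quantile (μ : Measure ℝ) [IsProbabilityMeasure μ] :
    (volume.restrict (Ioo 0 1)).map (quantile μ) = μ := by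
  refine Measure.ext_of_Iic _ _ fun x => ?_
  rw [Measure.map_apply_of_aemeasurable (aemeasurable_quantile μ) measurableSet_Iic,
    Measure.restrict_apply' measurableSet_Ioo, preimage_quantile_Iic_inter_Ioo,
    volume_Iic_inter_Ioo_zero_one (cdf_le_one μ x), ofReal_cdf]

noncomputable def comonotoneCoupling (μ ν : Measure ℝ) : Measure (ℝ × ℝ) :=
  (volume.restrict (Ioo 0 1)).map fun p => (quantile μ p, quantile ν p)

section ComonotoneCoupling

variable (μ ν : Measure ℝ)

lemma aemeasurable_quantile_prodMk :
    AEMeasurable (fun p => (quantile μ p, quantile ν p)) (volume.restrict (Ioo 0 1)) :=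
  (aemeasurable_quantile μ).prodMk (aemeasurable_quantile ν)

instance : IsProbabilityMeasure (comonotoneCoupling μ ν) :=
  Measure.isProbabilityMeasure_map (aemeasurable_quantile_prodMk μ ν)

lemma integral_comonotoneCoupling {f : ℝ × ℝ → ℝ}
    (hf : AEStronglyMeasurable f (comonotoneCoupling μ ν)) :
    ∫ z, f z ∂comonotoneCoupling μ ν = ∫ p in Ioo 0 1, f (quantile μ p, quantile ν p) :=
  integral_map (aemeasurable_quantile_prodMk μ ν) hf

lemma comonotoneCoupling_fst [IsProbabilityMeasure μ] : (comonotoneCoupling μ ν).fst = μ := by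
  rw [comonotoneCoupling, Measure.fst_map_prodMk₀ (aemeasurable_quantile ν), map_quantile]

lemma comonotoneCoupling_snd [IsProbabilityMeasure ν] : (comonotoneCoupling μ ν).snd = ν := by
  rw [comonotoneCoupling, Measure.snd_map_prodMk₀ (aemeasurable_quantile μ), map_quantile]

lemma comonotoneCoupling_Iic_prod_Iic [IsProbabilityMeasure μ] [IsProbabilityMeasure ν]
    (s t : ℝ) :
    comonotoneCoupling μ ν (Iic s ×ˢ Iic t) = min (μ (Iic s)) (ν (Iic t)) := by
  rw [comonotoneCoupling, Measure.map_apply_of_aemeasurable (aemeasurable_quantile_prodMk μ ν)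
      (measurableSet_Iic.prod measurableSet_Iic), Measure.restrict_apply' measurableSet_Ioo,
    mk_preimage_prod, inter_inter_distrib_right, preimage_quantile_Iic_inter_Ioo,
    preimage_quantile_Iic_inter_Ioo, ← inter_inter_distrib_right, Iic_inter_Iic,
    volume_Iic_inter_Ioo_zero_one (min_le_of_left_le (cdf_le_one μ s)), ENNReal.ofReal_min,
    ofReal_cdf, ofReal_cdf]

end ComonotoneCoupling

lemma measure_prod_le_min_fst_snd {α β : Type*} [MeasurableSpace α] [MeasurableSpace β]
    (π : Measure (α × β)) {s : Set α} {t : Set β} (hs : MeasurableSet s) (ht : MeasurableSet t) :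
    π (s ×ˢ t) ≤ min (π.fst s) (π.snd t) := by
  rw [Measure.fst_apply hs, Measure.snd_apply ht]
  exact le_min (measure_mono fun _ hp => hp.1) (measure_mono fun _ hp => hp.2)

section SecondMoment

variable {π : Measure (ℝ × ℝ)}

lemma integrable_fst_sq (h : Integrable (fun x => x ^ 2) π.fst) :
    Integrable (fun p : ℝ × ℝ => p.1 ^ 2) π :=
  (integrable_map_measure (by fun_prop) measurable_fst.aemeasurable).mp h

lemma integrable_snd_sq (h : Integrable (fun x => x ^ 2) π.snd) :
    Integrable (fun p : ℝ × ℝ => p.2 ^ 2) π :=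
  (integrable_map_measure (by fun_prop) measurable_snd.aemeasurable).mp h

lemma integrable_fst_mul_snd (h₁ : Integrable (fun x => x ^ 2) π.fst)
    (h₂ : Integrable (fun x => x ^ 2) π.snd) : Integrable (fun p : ℝ × ℝ => p.1 * p.2) π :=
  ((memLp_two_iff_integrable_sq (by fun_prop)).mpr (integrable_fst_sq h₁)).integrable_mul
    ((memLp_two_iff_integrable_sq (by fun_prop)).mpr (integrable_snd_sq h₂))

lemma integral_abs_sub_sq (h₁ : Integrable (fun x => x ^ 2) π.fst)
    (h₂ : Integrable (fun x => x ^ 2) π.snd) :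
    ∫ p, |p.1 - p.2| ^ 2 ∂π =
      ∫ x, x ^ 2 ∂π.fst + ∫ x, x ^ 2 ∂π.snd - 2 * ∫ p, p.1 * p.2 ∂π := by
  have hpt (p : ℝ × ℝ) : |p.1 - p.2| ^ 2 = p.1 ^ 2 + p.2 ^ 2 - 2 * (p.1 * p.2) := by
    rw [sq_abs]; ring
  have hsum : Integrable (fun p : ℝ × ℝ => p.1 ^ 2 + p.2 ^ 2) π :=
    (integrable_fst_sq h₁).add (integrable_snd_sq h₂)
  rw [integral_congr_ae (.of_forall hpt),
    integral_sub hsum ((integrable_fst_mul_snd h₁ h₂).const_mul 2),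
    integral_add (integrable_fst_sq h₁) (integrable_snd_sq h₂), integral_const_mul,
    Measure.fst, Measure.snd, integral_map measurable_fst.aemeasurable (by fun_prop),
    integral_map measurable_snd.aemeasurable (by fun_prop)]

end SecondMoment

lemma integral_abs_sub_sq_comonotoneCoupling_le {μ ν : Measure ℝ} [IsProbabilityMeasure μ]
    [IsProbabilityMeasure ν] (hμ : Integrable (fun x => x ^ 2) μ)
    (hν : Integrable (fun x => x ^ 2) ν) (π : Measure (ℝ × ℝ)) [IsProbabilityMeasure π]
    (hfst : π.fst = μ) (hsnd : π.snd = ν) :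
    ∫ p, |p.1 - p.2| ^ 2 ∂comonotoneCoupling μ ν ≤ ∫ p, |p.1 - p.2| ^ 2 ∂π := by
  have hμπ : Integrable (fun x => x ^ 2) π.fst := by rwa [hfst]
  have hνπ : Integrable (fun x => x ^ 2) π.snd := by rwa [hsnd]
  have hμ₀ : Integrable (fun x => x ^ 2) (comonotoneCoupling μ ν).fst := by
    rwa [comonotoneCoupling_fst]
  have hν₀ : Integrable (fun x => x ^ 2) (comonotoneCoupling μ ν).snd := by
    rwa [comonotoneCoupling_snd]
  have hxy : ∫ p, p.1 * p.2 ∂π ≤ ∫ p, p.1 * p.2 ∂comonotoneCoupling μ ν := by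
    refine integral_mul_le_of_forall_measure_Iic_prod_le (integrable_fst_mul_snd hμπ hνπ)
      (integrable_fst_mul_snd hμ₀ hν₀) (by rw [hfst, comonotoneCoupling_fst])
      (by rw [hsnd, comonotoneCoupling_snd]) fun s t => ?_
    rw [comonotoneCoupling_Iic_prod_Iic, ← hfst, ← hsnd]
    exact measure_prod_le_min_fst_snd π measurableSet_Iic measurableSet_Iic
  rw [integral_abs_sub_sq hμπ hνπ, integral_abs_sub_sq hμ₀ hν₀, comonotoneCoupling_fst,
    comonotoneCoupling_snd, hfst, hsnd]
  linarith

/-- Explicit 1D formula: `W₂²(μ,ν) = ∫₀¹ |F⁻¹(p) − G⁻¹(p)|² dp` in terms of quantile functions. -/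
theorem W2sq_quantile_formula (μ ν : Measure ℝ)
    [IsProbabilityMeasure μ] [IsProbabilityMeasure ν]
    (hμ : Integrable (fun x => x ^ 2) μ) (hν : Integrable (fun x => x ^ 2) ν)
    (F G Finv Ginv : ℝ → ℝ)
    (hF : ∀ x, F x = (μ (Set.Iic x)).toReal)
    (hG : ∀ x, G x = (ν (Set.Iic x)).toReal)
    (hFinv : ∀ p, Finv p = sInf {x : ℝ | p ≤ F x})
    (hGinv : ∀ p, Ginv p = sInf {x : ℝ | p ≤ G x}) :
    W2sq μ ν = ∫ p in Set.Ioo (0 : ℝ) 1, |Finv p - Ginv p| ^ 2 := by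
  obtain rfl : F = cdf μ := funext fun x => by rw [hF, cdf_eq_real, measureReal_def]
  obtain rfl : G = cdf ν := funext fun x => by rw [hG, cdf_eq_real, measureReal_def]
  obtain rfl : Finv = quantile μ := funext hFinv
  obtain rfl : Ginv = quantile ν := funext hGinv
  rw [← integral_comonotoneCoupling μ ν (f := fun z => |z.1 - z.2| ^ 2) (by fun_prop)]
  refine IsLeast.csInf_eq ⟨⟨comonotoneCoupling μ ν, inferInstance, comonotoneCoupling_fst μ ν,
    comonotoneCoupling_snd μ ν, rfl⟩, ?_⟩
  rintro _ ⟨π, hπ, hfst, hsnd, rfl⟩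
  exact integral_abs_sub_sq_comonotoneCoupling_le hμ hν π hfst hsnd
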